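/- The largest eigenvalue μ of the Laplacian matrix of the graph G strictly exceeds max over all vertices v of G of √(m_v³·(m_v + 3·d_v))/d_v. (This gives a counterexample to conjectured bound 32 of Brankov, Hansen and Stevanović.) -/

import Mathlib

/-- The edge list of the graph. -/
def edgeList : List (Fin 12 × Fin 12) :=
  [(0,3),(0,4),(0,8),(1,2),(1,3),(1,8),(1,10),(2,5),(2,7),(2,11),(3,7),(3,11),(4,6),(4,7),(5,8),(5,9),(6,9),(6,10),(7,10),(9,11),(10,11)]

/-- The graph under consideration. -/
def G : SimpleGraph (Fin 12) where
  Adj v w := (v, w) ∈ edgeList ∨ (w, v) ∈ edgeList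
  symm := ⟨fun _ _ h => h.symm⟩
  loopless := ⟨by intro v; fin_cases v <;> decide⟩

instance : DecidableRel G.Adj :=
  fun v w => inferInstanceAs (Decidable ((v, w) ∈ edgeList ∨ (w, v) ∈ edgeList))

/-- `d v` is the degree of the vertex `v`, as a real number. -/
noncomputable def d (v : Fin 12) : ℝ := G.degree v

/-- `m v` is the average of the degrees of the neighbours of `v`. -/
noncomputable def m (v : Fin 12) : ℝ :=
  (∑ u ∈ G.neighborFinset v, (G.degree u : ℝ)) / d v

def xint : Fin 12 → ℤ := ![-2,-5,5,5,2,-2,-2,-5,2,2,5,-5]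

lemma hx1 : dotProduct xint (Matrix.mulVec (G.lapMatrix ℤ) xint) = 1290 := by decide
lemma hx2 : dotProduct xint xint = 174 := by decide

def dnat : Fin 12 → ℕ := ![3,4,4,4,3,3,3,4,3,3,4,4]
def snat : Fin 12 → ℕ := ![10,15,15,15,10,10,10,15,10,10,15,15]

lemma hdeg : ∀ v, G.degree v = dnat v := by decide
lemma hsum : ∀ v, (∑ u ∈ G.neighborFinset v, G.degree u) = snat v := by decide

lemma hd (v : Fin 12) : d v = (dnat v : ℝ) := by rw [d, hdeg]
lemma hm (v : Fin 12) : m v = (snat v : ℝ) / (dnat v : ℝ) := by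
  rw [m, hd, ← Nat.cast_sum, hsum]

open Pointwise in
theorem laplacian_spectral_radius_exceeds_bound (μ : ℝ)
    (hmem : μ ∈ spectrum ℝ (G.lapMatrix ℝ))
    (hmax : ∀ ν ∈ spectrum ℝ (G.lapMatrix ℝ), ν ≤ μ) :
    Finset.univ.sup' Finset.univ_nonempty (fun v => Real.sqrt (m v ^ 3 * (m v + 3 * d v)) / d v) < μ := by
  have hL : (G.lapMatrix ℝ).IsHermitian := (SimpleGraph.posSemidef_lapMatrix ℝ G).1
  have hcast : ∀ i j, G.lapMatrix ℝ i j = ((G.lapMatrix ℤ i j : ℤ) : ℝ) := by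
    intro i j
    simp only [SimpleGraph.lapMatrix, Matrix.sub_apply, SimpleGraph.degMatrix,
      SimpleGraph.adjMatrix, Matrix.of_apply]
    rcases eq_or_ne i j with h | h <;>
      simp [Matrix.diagonal_apply, h] <;> split_ifs <;> push_cast <;> ring
  have e1 : dotProduct (fun i => ((xint i : ℤ) : ℝ))
      (Matrix.mulVec (G.lapMatrix ℝ) (fun i => ((xint i : ℤ) : ℝ))) = 1290 := by
    have := hx1
    simp only [dotProduct, Matrix.mulVec] at this ⊢
    simp only [hcast]
    have h' := congrArg (fun z : ℤ => (z : ℝ)) this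
    push_cast at h'
    exact h'
  have e2 : dotProduct (fun i => ((xint i : ℤ) : ℝ))
      (fun i => ((xint i : ℤ) : ℝ)) = 174 := by
    have := hx2
    simp only [dotProduct] at this ⊢
    exact_mod_cast congrArg (fun z : ℤ => (z : ℝ)) this
  have h1 : (μ • (1 : Matrix (Fin 12) (Fin 12) ℝ) - G.lapMatrix ℝ).IsHermitian := by
    apply Matrix.IsHermitian.sub _ hL
    rw [Matrix.IsHermitian, Matrix.conjTranspose_smul]
    simp
  have hev : ∀ i, 0 ≤ h1.eigenvalues i := by
    intro i
    have hmem2 := h1.eigenvalues_mem_spectrum_real i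
    have hsp : spectrum ℝ (μ • (1 : Matrix (Fin 12) (Fin 12) ℝ) - G.lapMatrix ℝ)
        = ({μ} : Set ℝ) - spectrum ℝ (G.lapMatrix ℝ) := by
      rw [show μ • (1 : Matrix (Fin 12) (Fin 12) ℝ)
          = algebraMap ℝ (Matrix (Fin 12) (Fin 12) ℝ) μ by
        rw [Algebra.algebraMap_eq_smul_one], spectrum.singleton_sub_eq]
    rw [hsp, Set.mem_sub] at hmem2
    obtain ⟨a, ha, b, hb, hab⟩ := hmem2
    rw [Set.mem_singleton_iff] at ha
    subst ha
    rw [← hab]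
    have := hmax b hb
    linarith
  have hps := h1.posSemidef_iff_eigenvalues_nonneg.mpr hev
  have h2 := hps.dotProduct_mulVec_nonneg (fun i => ((xint i : ℤ) : ℝ))
  rw [star_trivial, Matrix.sub_mulVec, dotProduct_sub, Matrix.smul_mulVec,
    Matrix.one_mulVec, dotProduct_smul, e1, e2] at h2
  have hmu : (1290 : ℝ) / 174 ≤ μ := by
    rw [div_le_iff₀ (by norm_num)]
    simp only [smul_eq_mul] at h2
    linarith
  refine lt_of_lt_of_le ?_ hmu
  rw [Finset.sup'_lt_iff]
  intro v _
  rw [hm v, hd v]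
  fin_cases v <;>
    simp only [snat, dnat, Matrix.cons_val_zero, Matrix.cons_val_one, Matrix.head_cons,
      Matrix.cons_val_succ, Nat.cast_ofNat] <;>
    rw [div_lt_iff₀ (by norm_num), Real.sqrt_lt' (by norm_num)] <;>
    norm_num
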